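/- arXiv:2506.08550 — 5 statements merged into one kernel-verified Lean document; each statement's English description precedes it below -/
import Mathlib

section
/- Let Σ : [0,∞) → ℝ^{d×d} be a differentiable one-parameter family of symmetric positive definite matrices, let c > 0 and β ∈ ℝ. Assume Σ(0) ≤ c·I in the Loewner order, and that for every t ≥ 0 and every unit vector w ∈ ℝ^d that is an eigenvector of Σ(t) corresponding to its largest eigenvalue, one has wᵀ Σ'(t) w ≤ β · (wᵀ Σ(t) w). Then Σ(t) ≤ e^{βt} c · I for every t ≥ 0. -/
/-!
Let `f t` be the largest eigenvalue of `Σ(t)`, i.e. the maximum of `vᵀ Σ(t) v` over unit vectors.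
If `w` attains that maximum at a time `z > x`, then `f z - f x ≤ wᵀ (Σ(z) - Σ(x)) w`; letting
`z ↓ x` along a sequence whose maximizers converge (compactness of the sphere), the limit is a
top eigenvector of `Σ(x)`, so the right lower Dini derivative of `f` is at most `β f(x)`.
Gronwall's inequality for Dini derivatives then gives `f t ≤ e^{βt} f 0 ≤ e^{βt} c`.
-/

open Matrix Set

open Filter Topology

theorem dotProduct_self_nonneg {n : Type*} [Fintype n] (v : n → ℝ) : 0 ≤ v ⬝ᵥ v :=
  Finset.sum_nonneg fun i _ => mul_self_nonneg (v i)

namespace Matrix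

theorem continuousAt_of_hasDerivAt_apply {m n : Type*} {S : ℝ → Matrix m n ℝ} {S' : Matrix m n ℝ}
    {x : ℝ} (hS : ∀ i j, HasDerivAt (fun s => S s i j) (S' i j) x) : ContinuousAt S x :=
  continuousAt_pi.2 fun i => continuousAt_pi.2 fun j => (hS i j).continuousAt

-- Euclidean, unlike `Metric.sphere (0 : n → ℝ) 1`, which is the sphere of the sup norm.
def unitSphere (n : Type*) [Fintype n] : Set (n → ℝ) := {v | v ⬝ᵥ v = 1}

variable {n : Type*} [Fintype n]

theorem isCompact_unitSphere : IsCompact (unitSphere n) := by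
  refine (isCompact_univ_pi fun _ => isCompact_Icc (a := (-1 : ℝ)) (b := 1)).of_isClosed_subset
    (isClosed_eq (by fun_prop) continuous_const) fun v (hv : v ⬝ᵥ v = 1) i _ => ?_
  have : v i * v i ≤ v ⬝ᵥ v :=
    Finset.single_le_sum (f := fun j => v j * v j) (fun j _ => mul_self_nonneg (v j))
      (Finset.mem_univ i)
  exact abs_le.mp (abs_le_one_iff_mul_self_le_one.mpr (hv ▸ this))

theorem unitSphere_nonempty [Nonempty n] : (unitSphere n).Nonempty := by
  classical
  obtain ⟨i⟩ := ‹Nonempty n›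
  exact ⟨Pi.single i 1, by simp [unitSphere]⟩

theorem continuous_dotProduct_mulVec_self :
    Continuous fun p : Matrix n n ℝ × (n → ℝ) => p.2 ⬝ᵥ p.1 *ᵥ p.2 := by
  simp only [dotProduct, mulVec]
  fun_prop

-- For symmetric `A` this is the largest eigenvalue (see `mulVec_eq_rayleighMax_smul`); it is `0`
-- when `n` is empty.
noncomputable def rayleighMax (A : Matrix n n ℝ) : ℝ :=
  sSup ((fun v => v ⬝ᵥ A *ᵥ v) '' unitSphere n)

theorem continuous_rayleighMax : Continuous (rayleighMax : Matrix n n ℝ → ℝ) :=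
  isCompact_unitSphere.continuous_sSup continuous_dotProduct_mulVec_self

theorem dotProduct_mulVec_le_rayleighMax_of_mem (A : Matrix n n ℝ) {v : n → ℝ}
    (hv : v ∈ unitSphere n) : v ⬝ᵥ A *ᵥ v ≤ rayleighMax A :=
  le_csSup (isCompact_unitSphere.image (by fun_prop)).bddAbove (mem_image_of_mem _ hv)

theorem exists_dotProduct_mulVec_eq_rayleighMax [Nonempty n] (A : Matrix n n ℝ) :
    ∃ w ∈ unitSphere n, w ⬝ᵥ A *ᵥ w = rayleighMax A :=
  (isCompact_unitSphere.image (by fun_prop)).sSup_mem (unitSphere_nonempty.image _)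

theorem dotProduct_mulVec_le_rayleighMax (A : Matrix n n ℝ) (v : n → ℝ) :
    v ⬝ᵥ A *ᵥ v ≤ rayleighMax A * (v ⬝ᵥ v) := by
  rcases eq_or_ne v 0 with rfl | hv
  · simp
  have hpos : 0 < v ⬝ᵥ v :=
    (dotProduct_self_nonneg v).lt_of_ne' (dotProduct_self_eq_zero.not.mpr hv)
  set r := √(v ⬝ᵥ v)
  have hr : r ^ 2 = v ⬝ᵥ v := Real.sq_sqrt hpos.le
  have hr0 : r ≠ 0 := (Real.sqrt_pos.mpr hpos).ne'
  have hu : r⁻¹ • v ∈ unitSphere n := by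
    simp only [unitSphere, mem_ofPred_eq, dotProduct_smul, smul_dotProduct, smul_eq_mul, ← hr]
    field_simp
  have := dotProduct_mulVec_le_rayleighMax_of_mem A hu
  simp only [mulVec_smul, dotProduct_smul, smul_dotProduct, smul_eq_mul] at this
  rw [← hr, ← div_le_iff₀ (by positivity)]
  field_simp at this ⊢
  exact this

theorem dotProduct_smul_one_sub_mulVec [DecidableEq n] (μ : ℝ) (A : Matrix n n ℝ) (v : n → ℝ) :
    star v ⬝ᵥ (μ • 1 - A) *ᵥ v = μ * (v ⬝ᵥ v) - v ⬝ᵥ A *ᵥ v := by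
  simp [sub_mulVec, smul_mulVec, dotProduct_sub]

theorem rayleighMax_le_of_posSemidef [Nonempty n] [DecidableEq n] {A : Matrix n n ℝ} {μ : ℝ}
    (h : (μ • 1 - A).PosSemidef) : rayleighMax A ≤ μ := by
  obtain ⟨w, hw, hwA⟩ := exists_dotProduct_mulVec_eq_rayleighMax A
  have := h.dotProduct_mulVec_nonneg w
  rw [dotProduct_smul_one_sub_mulVec, hw.out, mul_one, hwA] at this
  linarith

theorem posSemidef_of_rayleighMax_le [DecidableEq n] {A : Matrix n n ℝ} (hA : A.IsHermitian)
    {μ : ℝ} (h : rayleighMax A ≤ μ) : (μ • 1 - A).PosSemidef := by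
  refine .of_dotProduct_mulVec_nonneg ((isHermitian_one.smul (IsSelfAdjoint.all μ)).sub hA)
    fun v => ?_
  rw [dotProduct_smul_one_sub_mulVec]
  nlinarith [dotProduct_mulVec_le_rayleighMax A v, dotProduct_self_nonneg v]

theorem mulVec_eq_rayleighMax_smul [DecidableEq n] {A : Matrix n n ℝ} (hA : A.IsHermitian)
    {w : n → ℝ} (hw : w ∈ unitSphere n) (hmax : w ⬝ᵥ A *ᵥ w = rayleighMax A) :
    A *ᵥ w = rayleighMax A • w := by
  have hP := posSemidef_of_rayleighMax_le hA le_rfl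
  have hzero : star w ⬝ᵥ (rayleighMax A • 1 - A) *ᵥ w = 0 := by
    rw [dotProduct_smul_one_sub_mulVec, hw.out, mul_one, hmax, sub_self]
  have := (hP.dotProduct_mulVec_zero_iff w).mp hzero
  rw [sub_mulVec, smul_mulVec, one_mulVec, sub_eq_zero] at this
  exact this.symm

theorem slope_rayleighMax_le {S : ℝ → Matrix n n ℝ} {x z : ℝ} (hxz : x < z) {w : n → ℝ}
    (hw : w ∈ unitSphere n) (hmax : w ⬝ᵥ S z *ᵥ w = rayleighMax (S z)) :
    slope (fun s => rayleighMax (S s)) x z ≤ w ⬝ᵥ slope S x z *ᵥ w := by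
  have := dotProduct_mulVec_le_rayleighMax_of_mem (S x) hw
  simp only [slope_def_module, smul_mulVec, sub_mulVec, dotProduct_smul,
    dotProduct_sub, smul_eq_mul]
  exact mul_le_mul_of_nonneg_left (by linarith) (inv_nonneg.2 (sub_nonneg.2 hxz.le))

theorem frequently_slope_rayleighMax_lt [Nonempty n] {S : ℝ → Matrix n n ℝ}
    {S' : Matrix n n ℝ} {x r : ℝ} (hS : ∀ i j, HasDerivAt (fun s => S s i j) (S' i j) x)
    (hr : ∀ w ∈ unitSphere n, w ⬝ᵥ S x *ᵥ w = rayleighMax (S x) → w ⬝ᵥ S' *ᵥ w < r) :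
    ∃ᶠ z in 𝓝[>] x, slope (fun s => rayleighMax (S s)) x z < r := by
  have hcont : ContinuousAt S x := continuousAt_of_hasDerivAt_apply hS
  have hslope : Tendsto (slope S x) (𝓝[≠] x) (𝓝 S') :=
    tendsto_pi_nhds.2 fun i => tendsto_pi_nhds.2 fun j =>
      hasDerivAt_iff_tendsto_slope.1 (hS i j)
  obtain ⟨u, -, hxu, hu⟩ := exists_seq_strictAnti_tendsto x
  choose w hw hwmax using fun k => exists_dotProduct_mulVec_eq_rayleighMax (S (u k))
  obtain ⟨w₀, hw₀, φ, hφ, hwφ⟩ := isCompact_unitSphere.tendsto_subseq hw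
  have hv : Tendsto (u ∘ φ) atTop (𝓝[>] x) :=
    tendsto_nhdsWithin_iff.2 ⟨hu.comp hφ.tendsto_atTop, .of_forall fun k => hxu (φ k)⟩
  have hSv : Tendsto (fun k => S (u (φ k))) atTop (𝓝 (S x)) :=
    hcont.tendsto.comp (tendsto_nhds_of_tendsto_nhdsWithin hv)
  have hw₀max : w₀ ⬝ᵥ S x *ᵥ w₀ = rayleighMax (S x) := by
    refine tendsto_nhds_unique ?_ ((continuous_rayleighMax.tendsto _).comp hSv)
    refine ((continuous_dotProduct_mulVec_self.tendsto _).comp (hSv.prodMk_nhds hwφ)).congr ?_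
    exact fun k => hwmax (φ k)
  have hquad : Tendsto (fun k => w (φ k) ⬝ᵥ slope S x (u (φ k)) *ᵥ w (φ k)) atTop
      (𝓝 (w₀ ⬝ᵥ S' *ᵥ w₀)) :=
    (continuous_dotProduct_mulVec_self.tendsto (S', w₀)).comp
      ((hslope.comp (hv.mono_right (nhdsWithin_mono x fun _ h => ne_of_gt h))).prodMk_nhds hwφ)
  refine hv.frequently (Eventually.frequently ?_)
  filter_upwards [hquad.eventually (gt_mem_nhds (hr w₀ hw₀ hw₀max))] with k hk
  exact (slope_rayleighMax_le (hxu (φ k)) (hw (φ k)) (hwmax (φ k))).trans_lt hk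

end Matrix

theorem matrix_maximum_principle_upper_general {d : ℕ}
    (S S' : ℝ → Matrix (Fin d) (Fin d) ℝ) (c β : ℝ)
    (hderiv : ∀ t ∈ Ici (0 : ℝ), ∀ i j, HasDerivAt (fun s => S s i j) (S' t i j) t)
    (hposdef : ∀ t ∈ Ici (0 : ℝ), (S t).PosDef)
    (h0 : ((c • (1 : Matrix (Fin d) (Fin d) ℝ)) - S 0).PosSemidef)
    (heig : ∀ t ∈ Ici (0 : ℝ), ∀ w : Fin d → ℝ, w ⬝ᵥ w = 1 →
      ∀ μ : ℝ, (S t).mulVec w = μ • w →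
      (∀ v : Fin d → ℝ, v ⬝ᵥ (S t).mulVec v ≤ μ * (v ⬝ᵥ v)) →
      w ⬝ᵥ (S' t).mulVec w ≤ β * (w ⬝ᵥ (S t).mulVec w)) :
    ∀ t ∈ Ici (0 : ℝ),
      ((Real.exp (β * t) * c) • (1 : Matrix (Fin d) (Fin d) ℝ) - S t).PosSemidef := by
  intro t ht
  cases isEmpty_or_nonempty (Fin d)
  · exact Subsingleton.elim 0 (_ - S t) ▸ .zero
  set f : ℝ → ℝ := fun s => rayleighMax (S s)
  have hcont : ContinuousOn f (Icc 0 t) := fun s hs =>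
    (continuous_rayleighMax.continuousAt.comp
      (continuousAt_of_hasDerivAt_apply (hderiv s hs.1))).continuousWithinAt
  have hdini : ∀ x ∈ Ico 0 t, ∀ r, β * f x < r →
      ∃ᶠ z in 𝓝[>] x, (z - x)⁻¹ * (f z - f x) < r := by
    intro x hx r hr
    refine frequently_slope_rayleighMax_lt (hderiv x hx.1) fun w hw hmax => ?_
    have := heig x hx.1 w hw (f x) (mulVec_eq_rayleighMax_smul (hposdef x hx.1).1 hw hmax)
      (dotProduct_mulVec_le_rayleighMax _)
    rw [hmax] at this
    exact this.trans_lt hr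
  have hf0 : f 0 ≤ c := rayleighMax_le_of_posSemidef h0
  have hft := le_gronwallBound_of_liminf_deriv_right_le hcont hdini hf0
    (fun x _ => (add_zero _).ge) t ⟨ht, le_rfl⟩
  rw [sub_zero, gronwallBound_ε0, mul_comm] at hft
  exact posSemidef_of_rayleighMax_le (hposdef t ht).1 hft

/-- Matrix maximum principle, upper-bound case: if `Σ(0) ≤ c·I` and at every time `t ≥ 0`,
for every unit eigenvector `w` of `Σ(t)` corresponding to its largest eigenvalue one has
`wᵀ Σ'(t) w ≤ β · wᵀ Σ(t) w`, then `Σ(t) ≤ e^{βt} c · I` for all `t ≥ 0`. -/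
theorem matrix_maximum_principle_upper {d : ℕ}
    (S S' : ℝ → Matrix (Fin d) (Fin d) ℝ) (c β : ℝ) (hc : 0 < c)
    (hderiv : ∀ t ∈ Ici (0 : ℝ), ∀ i j, HasDerivAt (fun s => S s i j) (S' t i j) t)
    (hposdef : ∀ t ∈ Ici (0 : ℝ), (S t).PosDef)
    (h0 : ((c • (1 : Matrix (Fin d) (Fin d) ℝ)) - S 0).PosSemidef)
    (heig : ∀ t ∈ Ici (0 : ℝ), ∀ w : Fin d → ℝ, w ⬝ᵥ w = 1 →
      ∀ μ : ℝ, (S t).mulVec w = μ • w →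
      (∀ v : Fin d → ℝ, v ⬝ᵥ (S t).mulVec v ≤ μ * (v ⬝ᵥ v)) →
      w ⬝ᵥ (S' t).mulVec w ≤ β * (w ⬝ᵥ (S t).mulVec w)) :
    ∀ t ∈ Ici (0 : ℝ),
      ((Real.exp (β * t) * c) • (1 : Matrix (Fin d) (Fin d) ℝ) - S t).PosSemidef :=
  matrix_maximum_principle_upper_general S S' c β hderiv hposdef h0 heig
end

section
/- Let Σ : [0,∞) → ℝ^{d×d} be a differentiable one-parameter family of symmetric positive definite matrices, let c > 0 and β ∈ ℝ. Assume Σ(0) ≥ c·I in the Loewner order, and that for every t ≥ 0 and every unit vector w ∈ ℝ^d that is an eigenvector of Σ(t) corresponding to its smallest eigenvalue, one has wᵀ Σ'(t) w ≥ β · (wᵀ Σ(t) w). Then Σ(t) ≥ e^{βt} c · I for every t ≥ 0. -/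
/-!
Let `λ(s)` be the smallest eigenvalue of `S s`, i.e. the minimum of `wᵀ S(s) w` over unit vectors;
it is continuous in `s`. If `g` is a strict subsolution (`g' < β g`) with `g 0 < λ 0` and `g`
first catches up with `λ` at `t₀ > 0`, pick a unit minimal eigenvector `w` of `S t₀`. Then
`wᵀ S(s) w - g(s) ≥ λ(s) - g(s) > 0` before `t₀` and `= 0` at `t₀`, so its derivative
`wᵀ S'(t₀) w - g'(t₀)` is `≤ 0`; but the hypothesis gives `wᵀ S'(t₀) w ≥ β g(t₀) > g'(t₀)`.
Letting `g = e^{βs} (c - ε e^s)` with `ε → 0` gives `λ(t) ≥ e^{βt} c`.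
-/

open Matrix Set Filter Topology

theorem HasDerivAt.nonpos_of_eventually_nhdsLT_ge {f : ℝ → ℝ} {f' x : ℝ}
    (hf : HasDerivAt f f' x) (hle : ∀ᶠ s in 𝓝[<] x, f x ≤ f s) : f' ≤ 0 := by
  refine le_of_tendsto (hasDerivAt_iff_tendsto_slope_left_right.1 hf).1 ?_
  filter_upwards [hle, self_mem_nhdsWithin] with s hs (hlt : s < x)
  rw [slope_def_field]
  exact div_nonpos_of_nonneg_of_nonpos (sub_nonneg.2 hs) (sub_nonpos.2 hlt.le)

theorem ContinuousOn.exists_first_zero {φ : ℝ → ℝ} {a b : ℝ} (hφ : ContinuousOn φ (Icc a b))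
    (hab : a ≤ b) (ha : 0 < φ a) (hb : φ b ≤ 0) :
    ∃ t₀ ∈ Ioc a b, φ t₀ = 0 ∧ ∀ s ∈ Ico a t₀, 0 < φ s := by
  have hzero : ∀ s ∈ Icc a b, φ s ≤ 0 → ∃ s' ∈ Icc a s, φ s' = 0 := fun s hs hφs =>
    intermediate_value_Icc' hs.1 (hφ.mono (Icc_subset_Icc_right hs.2)) ⟨hφs, ha.le⟩
  set Z := Icc a b ∩ φ ⁻¹' {0}
  have hZ : IsClosed Z := hφ.preimage_isClosed_of_isClosed isClosed_Icc isClosed_singleton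
  have hbdd : BddBelow Z := ⟨a, fun z (hz : z ∈ Z) => hz.1.1⟩
  obtain ⟨s, hs, hφs⟩ := hzero b ⟨hab, le_rfl⟩ hb
  obtain ⟨⟨ha₀, hb₀⟩, hφ₀ : φ (sInf Z) = 0⟩ := hZ.csInf_mem ⟨s, hs, hφs⟩ hbdd
  refine ⟨sInf Z, ⟨ha₀.lt_of_ne fun heq => ?_, hb₀⟩, hφ₀, fun s hs => ?_⟩
  · rw [← heq] at hφ₀
    linarith
  · by_contra! hφs
    obtain ⟨s', hs', hφs'⟩ := hzero s ⟨hs.1, hs.2.le.trans hb₀⟩ hφs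
    have := csInf_le hbdd (⟨⟨hs'.1, hs'.2.trans (hs.2.le.trans hb₀)⟩, hφs'⟩ : s' ∈ Z)
    linarith [hs'.2, hs.2]

namespace Matrix

variable {n : Type*} [Fintype n]

theorem isCompact_setOf_dotProduct_self_eq_one : IsCompact {w : n → ℝ | w ⬝ᵥ w = 1} := by
  refine Metric.isCompact_of_isClosed_isBounded (isClosed_eq (by fun_prop) continuous_const)
    ((Metric.isBounded_closedBall (x := 0) (r := 1)).subset fun w (hw : w ⬝ᵥ w = 1) => ?_)
  refine mem_closedBall_zero_iff.2 ((pi_norm_le_iff_of_nonneg zero_le_one).2 fun i => ?_)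
  rw [Real.norm_eq_abs, abs_le_one_iff_mul_self_le_one, ← hw]
  exact Finset.single_le_sum (f := fun j => w j * w j) (fun j _ => mul_self_nonneg (w j))
    (Finset.mem_univ i)

/-- For a symmetric matrix this is its smallest eigenvalue (and it is `0` when `n` is empty). -/
noncomputable def rayleighInf (M : Matrix n n ℝ) : ℝ :=
  sInf ((fun w => w ⬝ᵥ M *ᵥ w) '' {w | w ⬝ᵥ w = 1})

theorem continuous_rayleighInf : Continuous (rayleighInf : Matrix n n ℝ → ℝ) :=
  isCompact_setOf_dotProduct_self_eq_one.continuous_sInf (f := fun M w => w ⬝ᵥ M *ᵥ w)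
    (by fun_prop)

theorem rayleighInf_le (M : Matrix n n ℝ) {w : n → ℝ} (hw : w ⬝ᵥ w = 1) :
    rayleighInf M ≤ w ⬝ᵥ M *ᵥ w :=
  csInf_le (isCompact_setOf_dotProduct_self_eq_one.bddBelow_image (by fun_prop)) ⟨w, hw, rfl⟩

theorem exists_dotProduct_mulVec_eq_rayleighInf [Nonempty n] (M : Matrix n n ℝ) :
    ∃ w : n → ℝ, w ⬝ᵥ w = 1 ∧ w ⬝ᵥ M *ᵥ w = rayleighInf M := by
  classical
  have hne : {w : n → ℝ | w ⬝ᵥ w = 1}.Nonempty :=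
    ⟨Pi.single (Classical.arbitrary n) 1, by simp⟩
  exact (isCompact_setOf_dotProduct_self_eq_one.image_of_continuousOn (by fun_prop)).sInf_mem
    (hne.image _)

theorem rayleighInf_mul_dotProduct_self_le (M : Matrix n n ℝ) (v : n → ℝ) :
    rayleighInf M * (v ⬝ᵥ v) ≤ v ⬝ᵥ M *ᵥ v := by
  rcases eq_or_ne v 0 with rfl | hv
  · simp
  have hpos : 0 < v ⬝ᵥ v := by simpa using dotProduct_star_self_pos_iff.2 hv
  set r := √(v ⬝ᵥ v)
  have hr : 0 < r := Real.sqrt_pos.2 hpos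
  have hr2 : r * r = v ⬝ᵥ v := Real.mul_self_sqrt hpos.le
  have h := rayleighInf_le M (w := r⁻¹ • v) (by
    rw [smul_dotProduct, dotProduct_smul, ← hr2, smul_eq_mul, smul_eq_mul]; field_simp)
  rw [mulVec_smul, smul_dotProduct, dotProduct_smul, smul_eq_mul, smul_eq_mul, ← mul_assoc,
    ← mul_inv, hr2, le_inv_mul_iff₀ hpos] at h
  linarith

theorem hasDerivAt_dotProduct_mulVec {S : ℝ → Matrix n n ℝ} {S' : Matrix n n ℝ} {t : ℝ}
    (hS : ∀ i j, HasDerivAt (fun s => S s i j) (S' i j) t) (w : n → ℝ) :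
    HasDerivAt (fun s => w ⬝ᵥ S s *ᵥ w) (w ⬝ᵥ S' *ᵥ w) t := by
  simp only [dotProduct, mulVec, Finset.mul_sum]
  exact HasDerivAt.fun_sum fun i _ => HasDerivAt.fun_sum fun j _ =>
    ((hS i j).mul_const (w j)).const_mul (w i)

variable [DecidableEq n]

theorem star_dotProduct_sub_smul_one_mulVec (M : Matrix n n ℝ) (μ : ℝ) (v : n → ℝ) :
    star v ⬝ᵥ (M - μ • 1) *ᵥ v = v ⬝ᵥ M *ᵥ v - μ * (v ⬝ᵥ v) := by
  simp only [star_trivial, sub_mulVec, smul_mulVec, one_mulVec, dotProduct_sub, dotProduct_smul,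
    smul_eq_mul]

theorem posSemidef_sub_smul_one_iff [Nonempty n] {M : Matrix n n ℝ} (hM : M.IsHermitian)
    {μ : ℝ} : (M - μ • 1).PosSemidef ↔ μ ≤ rayleighInf M := by
  constructor
  · intro h
    obtain ⟨w, hw, hmin⟩ := exists_dotProduct_mulVec_eq_rayleighInf M
    have := h.dotProduct_mulVec_nonneg w
    rw [star_dotProduct_sub_smul_one_mulVec, hw] at this
    linarith
  · intro h
    refine PosSemidef.of_dotProduct_mulVec_nonneg (hM.sub (isHermitian_one.smul (.all μ)))
      fun v => ?_
    rw [star_dotProduct_sub_smul_one_mulVec]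
    have hv : 0 ≤ v ⬝ᵥ v := by simpa using dotProduct_star_self_nonneg v
    nlinarith [rayleighInf_mul_dotProduct_self_le M v]

theorem mulVec_eq_rayleighInf_smul [Nonempty n] {M : Matrix n n ℝ} (hM : M.IsHermitian)
    {w : n → ℝ} (hw : w ⬝ᵥ w = 1) (hmin : w ⬝ᵥ M *ᵥ w = rayleighInf M) :
    M *ᵥ w = rayleighInf M • w := by
  have hpsd := (posSemidef_sub_smul_one_iff hM).2 le_rfl
  have hzero : (M - rayleighInf M • 1) *ᵥ w = 0 := (hpsd.dotProduct_mulVec_zero_iff w).1 (by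
    rw [star_dotProduct_sub_smul_one_mulVec, hw, hmin, mul_one, sub_self])
  rwa [sub_mulVec, smul_mulVec, one_mulVec, sub_eq_zero] at hzero

theorem lt_rayleighInf_of_hasDerivAt_lt [Nonempty n] {S S' : ℝ → Matrix n n ℝ} {β : ℝ}
    (hderiv : ∀ t ∈ Ici (0 : ℝ), ∀ i j, HasDerivAt (fun s => S s i j) (S' t i j) t)
    (hherm : ∀ t ∈ Ici (0 : ℝ), (S t).IsHermitian)
    (heig : ∀ t ∈ Ici (0 : ℝ), ∀ w : n → ℝ, w ⬝ᵥ w = 1 →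
      ∀ μ : ℝ, S t *ᵥ w = μ • w → (∀ v : n → ℝ, μ * (v ⬝ᵥ v) ≤ v ⬝ᵥ S t *ᵥ v) →
      β * (w ⬝ᵥ S t *ᵥ w) ≤ w ⬝ᵥ S' t *ᵥ w)
    {g g' : ℝ → ℝ} (hg : ∀ t ∈ Ici (0 : ℝ), HasDerivAt g (g' t) t)
    (hg' : ∀ t ∈ Ici (0 : ℝ), g' t < β * g t) (hg0 : g 0 < rayleighInf (S 0)) :
    ∀ t ∈ Ici (0 : ℝ), g t < rayleighInf (S t) := by
  intro t ht
  by_contra! hle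
  have hS : ContinuousOn S (Ici 0) := fun s hs => continuousWithinAt_pi.2 fun i =>
    continuousWithinAt_pi.2 fun j => (hderiv s hs i j).continuousAt.continuousWithinAt
  have hgap : ContinuousOn (fun s => rayleighInf (S s) - g s) (Icc 0 t) :=
    ((continuous_rayleighInf.comp_continuousOn hS).mono Icc_subset_Ici_self).sub
      fun s hs => (hg s hs.1).continuousAt.continuousWithinAt
  obtain ⟨t₀, ⟨ht₀pos, -⟩, htouch, hbefore⟩ :=
    hgap.exists_first_zero ht (sub_pos.2 hg0) (sub_nonpos.2 hle)
  have ht₀ : t₀ ∈ Ici 0 := ht₀pos.le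
  obtain ⟨w, hw, hmin⟩ := exists_dotProduct_mulVec_eq_rayleighInf (S t₀)
  have hslope : g' t₀ < w ⬝ᵥ S' t₀ *ᵥ w := calc
    g' t₀ < β * g t₀ := hg' t₀ ht₀
    _ = β * (w ⬝ᵥ S t₀ *ᵥ w) := by rw [hmin, sub_eq_zero.1 htouch]
    _ ≤ w ⬝ᵥ S' t₀ *ᵥ w := heig t₀ ht₀ w hw _
      (mulVec_eq_rayleighInf_smul (hherm t₀ ht₀) hw hmin) (rayleighInf_mul_dotProduct_self_le _)
  have hgap_le : ∀ᶠ s in 𝓝[<] t₀, w ⬝ᵥ S t₀ *ᵥ w - g t₀ ≤ w ⬝ᵥ S s *ᵥ w - g s := by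
    filter_upwards [Ioo_mem_nhdsLT ht₀pos] with s hs
    have := hbefore s ⟨hs.1.le, hs.2⟩
    have := rayleighInf_le (S s) hw
    linarith
  have hnonpos : w ⬝ᵥ S' t₀ *ᵥ w - g' t₀ ≤ 0 :=
    ((hasDerivAt_dotProduct_mulVec (hderiv t₀ ht₀) w).sub
      (hg t₀ ht₀)).nonpos_of_eventually_nhdsLT_ge hgap_le
  linarith

end Matrix

theorem matrix_maximum_principle_lower_general {d : ℕ}
    (S S' : ℝ → Matrix (Fin d) (Fin d) ℝ) (c β : ℝ)
    (hderiv : ∀ t ∈ Ici (0 : ℝ), ∀ i j, HasDerivAt (fun s => S s i j) (S' t i j) t)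
    (hposdef : ∀ t ∈ Ici (0 : ℝ), (S t).PosDef)
    (h0 : (S 0 - c • (1 : Matrix (Fin d) (Fin d) ℝ)).PosSemidef)
    (heig : ∀ t ∈ Ici (0 : ℝ), ∀ w : Fin d → ℝ, w ⬝ᵥ w = 1 →
      ∀ μ : ℝ, (S t).mulVec w = μ • w →
      (∀ v : Fin d → ℝ, μ * (v ⬝ᵥ v) ≤ v ⬝ᵥ (S t).mulVec v) →
      β * (w ⬝ᵥ (S t).mulVec w) ≤ w ⬝ᵥ (S' t).mulVec w) :
    ∀ t ∈ Ici (0 : ℝ),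
      (S t - (Real.exp (β * t) * c) • (1 : Matrix (Fin d) (Fin d) ℝ)).PosSemidef := by
  intro t ht
  rcases isEmpty_or_nonempty (Fin d) with hd | hd
  · convert PosSemidef.zero
    exact Subsingleton.elim _ _
  have hherm : ∀ s ∈ Ici (0 : ℝ), (S s).IsHermitian := fun s hs => (hposdef s hs).isHermitian
  have hc : c ≤ rayleighInf (S 0) :=
    (posSemidef_sub_smul_one_iff (hherm 0 (mem_Ici.2 le_rfl))).1 h0
  have hsub : ∀ ε > 0, Real.exp (β * t) * (c - ε * Real.exp t) < rayleighInf (S t) :=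
    fun ε hε => lt_rayleighInf_of_hasDerivAt_lt hderiv hherm heig
      (g := fun s => Real.exp (β * s) * (c - ε * Real.exp s))
      (g' := fun s => β * (Real.exp (β * s) * (c - ε * Real.exp s))
        - ε * Real.exp (β * s) * Real.exp s)
      (fun s _ => (((hasDerivAt_id s).const_mul β).exp.mul
        (((Real.hasDerivAt_exp s).const_mul ε).const_sub c)).congr_deriv (by simp only [id]; ring))
      (fun s _ => sub_lt_self _ (by positivity))
      (by simp; linarith) t ht
  have hlim : Tendsto (fun ε => Real.exp (β * t) * (c - ε * Real.exp t)) (𝓝[>] 0)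
      (𝓝 (Real.exp (β * t) * c)) := by
    have hcont : Continuous fun ε => Real.exp (β * t) * (c - ε * Real.exp t) := by fun_prop
    simpa using (hcont.tendsto 0).mono_left nhdsWithin_le_nhds
  rw [posSemidef_sub_smul_one_iff (hherm t ht)]
  exact le_of_tendsto hlim (eventually_nhdsWithin_of_forall fun ε hε => (hsub ε hε).le)

/-- Matrix maximum principle, lower-bound case: if `Σ(0) ≥ c·I` and at every time `t ≥ 0`,
for every unit eigenvector `w` of `Σ(t)` corresponding to its smallest eigenvalue one has
`wᵀ Σ'(t) w ≥ β · wᵀ Σ(t) w`, then `Σ(t) ≥ e^{βt} c · I` for all `t ≥ 0`. -/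
theorem matrix_maximum_principle_lower {d : ℕ}
    (S S' : ℝ → Matrix (Fin d) (Fin d) ℝ) (c β : ℝ) (hc : 0 < c)
    (hderiv : ∀ t ∈ Ici (0 : ℝ), ∀ i j, HasDerivAt (fun s => S s i j) (S' t i j) t)
    (hposdef : ∀ t ∈ Ici (0 : ℝ), (S t).PosDef)
    (h0 : (S 0 - c • (1 : Matrix (Fin d) (Fin d) ℝ)).PosSemidef)
    (heig : ∀ t ∈ Ici (0 : ℝ), ∀ w : Fin d → ℝ, w ⬝ᵥ w = 1 →
      ∀ μ : ℝ, (S t).mulVec w = μ • w →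
      (∀ v : Fin d → ℝ, μ * (v ⬝ᵥ v) ≤ v ⬝ᵥ (S t).mulVec v) →
      β * (w ⬝ᵥ (S t).mulVec w) ≤ w ⬝ᵥ (S' t).mulVec w) :
    ∀ t ∈ Ici (0 : ℝ),
      (S t - (Real.exp (β * t) * c) • (1 : Matrix (Fin d) (Fin d) ℝ)).PosSemidef :=
  matrix_maximum_principle_lower_general S S' c β hderiv hposdef h0 heig
end

section
/- Let T ∈ (0,∞], let B : [0,T) → ℝ^{d×d} be continuous, and let Σ : [0,T) → ℝ^{d×d} be differentiable with Σ(t) symmetric for every t and satisfying the linear evolution equation Σ'(t) = B(t)ᵀ Σ(t) + Σ(t) B(t) for all t ∈ [0,T). If Σ(0) is positive semidefinite of rank l, then Σ(t) is positive semidefinite of rank l for every t ∈ [0,T). -/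
/-!
Let `A` solve `A' = -B A` with `A(c) = 1`. Then `(Aᵀ Σ A)' = 0`, so `Σ(c) = A(t)ᵀ Σ(t) A(t)`,
and `Σ(t)` is congruent to `Σ(c)` as long as `A(t)` stays invertible, which is the case for `t`
near `c`. Congruence is an equivalence relation, so by connectedness of `[0, t]` it relates `Σ(0)`
to `Σ(t)`; and congruence preserves positive semidefiniteness and rank.
-/

open Matrix Set Filter Topology
open scoped NNReal ENNReal

section Congruence

variable {R : Type*} [Monoid R] [StarMul R]

/-- For real matrices `star` is the transpose, so this is congruence of matrices. -/
def IsCongruent (x y : R) : Prop :=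
  ∃ u : Rˣ, y = star (u : R) * x * u

theorem IsCongruent.symm {x y : R} (h : IsCongruent x y) : IsCongruent y x := by
  obtain ⟨u, rfl⟩ := h
  refine ⟨u⁻¹, ?_⟩
  calc x = star ((u : R) * ↑u⁻¹) * x * (↑u * ↑u⁻¹) := by simp
    _ = star (↑u⁻¹ : R) * (star ↑u * x * ↑u) * ↑u⁻¹ := by simp only [star_mul, mul_assoc]

theorem IsCongruent.trans {x y z : R} (hxy : IsCongruent x y) (hyz : IsCongruent y z) :
    IsCongruent x z := by
  obtain ⟨u, rfl⟩ := hxy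
  obtain ⟨v, rfl⟩ := hyz
  exact ⟨u * v, by simp only [Units.val_mul, star_mul, mul_assoc]⟩

theorem IsCongruent.map {S F : Type*} [Monoid S] [StarMul S] [FunLike F R S]
    [MonoidHomClass F R S] [StarHomClass F R S] (f : F) {x y : R} (h : IsCongruent x y) :
    IsCongruent (f x) (f y) := by
  obtain ⟨u, rfl⟩ := h
  exact ⟨Units.map f u, by simp only [map_mul, map_star, Units.coe_map, MonoidHom.coe_coe]⟩

end Congruence

namespace IsCongruent

variable {n R : Type*} [Fintype n] [DecidableEq n]

theorem posSemidef [Ring R] [PartialOrder R] [StarRing R] {M N : Matrix n n R}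
    (h : IsCongruent M N) (hM : M.PosSemidef) : N.PosSemidef := by
  obtain ⟨U, rfl⟩ := h
  exact hM.conjTranspose_mul_mul_same (U : Matrix n n R)

theorem rank_eq [CommRing R] [StarRing R] {M N : Matrix n n R} (h : IsCongruent M N) :
    N.rank = M.rank := by
  obtain ⟨U, rfl⟩ := h
  have hU : IsUnit (U : Matrix n n R).det := (isUnit_iff_isUnit_det _).1 U.isUnit
  rw [rank_mul_eq_left_of_isUnit_det _ _ hU, star_eq_conjTranspose,
    rank_mul_eq_right_of_isUnit_det _ _ (by simp [det_conjTranspose, hU.star])]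

end IsCongruent

section BanachAlgebra

variable {𝔸 : Type*} [NormedRing 𝔸] [NormedAlgebra ℝ 𝔸]

theorem exists_hasDerivWithinAt_mul_left [CompleteSpace 𝔸] {M : ℝ → 𝔸} {a b c : ℝ}
    (hM : ContinuousOn M (Icc a b)) (hc : c ∈ Icc a b) (x₀ : 𝔸) :
    ∃ ε > 0, ∃ X : ℝ → 𝔸, X c = x₀ ∧ ∀ t ∈ Icc (max a (c - ε)) (min b (c + ε)),
      HasDerivWithinAt X (M t * X t) (Icc (max a (c - ε)) (min b (c + ε))) t := by
  -- `L` bounds `M t * X` on the unit ball around `x₀`, so within time `1 / (L + 1)` of `c`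
  -- the solution cannot leave that ball.
  obtain ⟨C, hC⟩ := isCompact_Icc.exists_bound_of_continuousOn hM
  set K : ℝ≥0 := C.toNNReal
  have hK : ∀ t ∈ Icc a b, ‖M t‖ ≤ K := fun t ht => (hC t ht).trans (Real.le_coe_toNNReal C)
  set L : ℝ≥0 := K * (‖x₀‖₊ + 1)
  set ε : ℝ := 1 / (L + 1)
  have hε : 0 < ε := by positivity
  have hsub : Icc (max a (c - ε)) (min b (c + ε)) ⊆ Icc a b :=
    Icc_subset_Icc (le_max_left _ _) (min_le_left _ _)
  have hc' : c ∈ Icc (max a (c - ε)) (min b (c + ε)) :=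
    ⟨max_le hc.1 (by linarith), le_min hc.2 (by linarith)⟩
  have hPL : IsPicardLindelof (fun t X => M t * X) ⟨c, hc'⟩ x₀ 1 0 L K :=
    { lipschitzOnWith := fun t ht => LipschitzOnWith.of_dist_le_mul fun X _ Y _ => by
        rw [dist_eq_norm, dist_eq_norm, ← mul_sub]
        exact (norm_mul_le _ _).trans (by gcongr; exact hK t (hsub ht))
      continuousOn := fun X _ => (hM.mono hsub).mul continuousOn_const
      norm_le := fun t ht X hX => by
        have hX : ‖X‖ ≤ ‖x₀‖ + 1 := by simpa using norm_le_of_mem_closedBall hX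
        calc ‖M t * X‖ ≤ ‖M t‖ * ‖X‖ := norm_mul_le _ _
          _ ≤ K * (‖x₀‖ + 1) := by gcongr; exact hK t (hsub ht)
      mul_max_le := by
        have hmax : max (min b (c + ε) - c) (c - max a (c - ε)) ≤ ε :=
          max_le (by linarith [min_le_right b (c + ε)]) (by linarith [le_max_right a (c - ε)])
        calc (L : ℝ) * max (min b (c + ε) - c) (c - max a (c - ε)) ≤ L * ε := by gcongr
          _ ≤ 1 := by
            rw [mul_one_div, div_le_one (by positivity)]
            linarith
          _ = ((1 : ℝ≥0) : ℝ) - ((0 : ℝ≥0) : ℝ) := by simp }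
  obtain ⟨X, hXc, hX⟩ := hPL.exists_eq_forall_mem_Icc_hasDerivWithinAt₀
  exact ⟨ε, hε, X, hXc, hX⟩

variable [StarRing 𝔸] [StarModule ℝ 𝔸] [ContinuousStar 𝔸]

theorem star_mul_mul_eq_of_hasDerivWithinAt {A B S : ℝ → 𝔸} {a b : ℝ}
    (hA : ∀ t ∈ Icc a b, HasDerivWithinAt A (-B t * A t) (Icc a b) t)
    (hS : ∀ t ∈ Icc a b, HasDerivWithinAt S (star (B t) * S t + S t * B t) (Icc a b) t) :
    ∀ t ∈ Icc a b, star (A t) * S t * A t = star (A a) * S a * A a := by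
  have hderiv : ∀ t ∈ Icc a b,
      HasDerivWithinAt (fun s => star (A s) * S s * A s) 0 (Icc a b) t := by
    intro t ht
    convert ((hA t ht).star.fun_mul (hS t ht)).fun_mul (hA t ht) using 1
    simp only [star_mul, star_neg]
    noncomm_ring
  refine constant_of_has_deriv_right_zero (fun t ht => (hderiv t ht).continuousWithinAt)
    fun t ht => ?_
  exact (hderiv t (Ico_subset_Icc_self ht)).mono_of_mem_nhdsWithin (Icc_mem_nhdsGE_of_mem ht)

variable [CompleteSpace 𝔸]

theorem eventually_isCongruent_of_hasDerivWithinAt {B S : ℝ → 𝔸} {a b c : ℝ}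
    (hB : ContinuousOn B (Icc a b))
    (hS : ∀ t ∈ Icc a b, HasDerivWithinAt S (star (B t) * S t + S t * B t) (Icc a b) t)
    (hc : c ∈ Icc a b) : ∀ᶠ t in 𝓝[Icc a b] c, IsCongruent (S c) (S t) := by
  obtain ⟨ε, hε, A, hAc, hA⟩ := exists_hasDerivWithinAt_mul_left hB.neg hc 1
  set I := Icc (max a (c - ε)) (min b (c + ε))
  have hsub : I ⊆ Icc a b := Icc_subset_Icc (le_max_left _ _) (min_le_left _ _)
  have hcI : c ∈ I := ⟨max_le hc.1 (by linarith), le_min hc.2 (by linarith)⟩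
  have hI : I ∈ 𝓝[Icc a b] c := by
    rw [show I = Icc a b ∩ Icc (c - ε) (c + ε) from Icc_inter_Icc.symm]
    exact inter_mem_nhdsWithin _ (Icc_mem_nhds (by linarith) (by linarith))
  have hconst : ∀ t ∈ I, star (A t) * S t * A t = S c := by
    intro t ht
    have hconserved := star_mul_mul_eq_of_hasDerivWithinAt hA
      (fun s hs => (hS s (hsub hs)).mono hsub)
    rw [hconserved t ht, ← hconserved c hcI, hAc]
    simp
  have hunit : ∀ᶠ t in 𝓝[I] c, IsUnit (A t) :=
    (hA c hcI).continuousWithinAt (by rw [hAc]; exact Units.isOpen.mem_nhds isUnit_one)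
  filter_upwards [nhdsWithin_le_of_mem hI hunit, hI] with t hut htI
  exact IsCongruent.symm ⟨hut.unit, (hconst t htI).symm⟩

theorem isCongruent_of_hasDerivWithinAt {B S : ℝ → 𝔸} {a b : ℝ}
    (hB : ContinuousOn B (Icc a b))
    (hS : ∀ t ∈ Icc a b, HasDerivWithinAt S (star (B t) * S t + S t * B t) (Icc a b) t)
    {t : ℝ} (ht : t ∈ Icc a b) : IsCongruent (S a) (S t) :=
  isPreconnected_Icc.induction₂ (fun x y => IsCongruent (S x) (S y))
    (fun _ hc => eventually_isCongruent_of_hasDerivWithinAt hB hS hc)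
    (fun _ _ _ _ _ _ => IsCongruent.trans) (fun _ _ _ _ => IsCongruent.symm)
    (left_mem_Icc.2 (ht.1.trans ht.2)) ht

end BanachAlgebra

section MatrixFlow

variable {m n : Type*} [Fintype m] [Fintype n] [DecidableEq m] [DecidableEq n]
  {E F : Type*} [FunLike F (Matrix m n ℝ) E]

theorem Matrix.map_eq_sum_smul_single [AddCommMonoid E] [Module ℝ E]
    [LinearMapClass F ℝ (Matrix m n ℝ) E] (φ : F) (N : Matrix m n ℝ) :
    φ N = ∑ i, ∑ j, N i j • φ (single i j 1) := by
  conv_lhs => rw [matrix_eq_sum_single N]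
  simp only [map_sum, ← map_smul, smul_single, smul_eq_mul, mul_one]

theorem Matrix.continuousOn_map_of_forall_apply [AddCommMonoid E] [Module ℝ E]
    [TopologicalSpace E] [ContinuousAdd E] [ContinuousSMul ℝ E]
    [LinearMapClass F ℝ (Matrix m n ℝ) E] (φ : F) {M : ℝ → Matrix m n ℝ} {s : Set ℝ}
    (h : ∀ i j, ContinuousOn (fun u => M u i j) s) : ContinuousOn (fun u => φ (M u)) s := by
  rw [funext fun u => map_eq_sum_smul_single φ (M u)]
  exact continuousOn_finsetSum _ fun i _ => continuousOn_finsetSum _ fun j _ =>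
    (h i j).smul continuousOn_const

theorem Matrix.hasDerivWithinAt_map_of_forall_apply [NormedAddCommGroup E] [NormedSpace ℝ E]
    [LinearMapClass F ℝ (Matrix m n ℝ) E] (φ : F) {M : ℝ → Matrix m n ℝ} {M' : Matrix m n ℝ}
    {s : Set ℝ} {t : ℝ} (h : ∀ i j, HasDerivWithinAt (fun u => M u i j) (M' i j) s t) :
    HasDerivWithinAt (fun u => φ (M u)) (φ M') s t := by
  rw [map_eq_sum_smul_single φ, funext fun u => map_eq_sum_smul_single φ (M u)]
  exact HasDerivWithinAt.fun_sum fun i _ => HasDerivWithinAt.fun_sum fun j _ =>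
    (h i j).smul_const _

theorem Matrix.isCongruent_of_forall_hasDerivWithinAt_apply {B S : ℝ → Matrix n n ℝ} {a b : ℝ}
    (hB : ∀ i j, ContinuousOn (fun t => B t i j) (Icc a b))
    (hS : ∀ t ∈ Icc a b, ∀ i j,
      HasDerivWithinAt (fun s => S s i j) (((B t)ᵀ * S t + S t * B t) i j) (Icc a b) t)
    {t : ℝ} (ht : t ∈ Icc a b) : IsCongruent (S a) (S t) := by
  -- The operator norm makes real matrices a Banach star algebra with `star = ᵀ`.
  let φ : Matrix n n ℝ ≃⋆ₐ[ℝ] (EuclideanSpace ℝ n →L[ℝ] EuclideanSpace ℝ n) := toEuclideanCLM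
  have hS' : ∀ s ∈ Icc a b, HasDerivWithinAt (fun u => φ (S u))
      (star (φ (B s)) * φ (S s) + φ (S s) * φ (B s)) (Icc a b) s := by
    intro s hs
    simpa only [map_add, map_mul, ← map_star, star_eq_conjTranspose,
      conjTranspose_eq_transpose_of_trivial] using hasDerivWithinAt_map_of_forall_apply φ (hS s hs)
  have hφ : IsCongruent (φ (S a)) (φ (S t)) :=
    isCongruent_of_hasDerivWithinAt (continuousOn_map_of_forall_apply φ hB) hS' ht
  simpa using hφ.map φ.symm

end MatrixFlow

theorem flow_preserves_rank_stratum_general {d : ℕ} (T : ℝ≥0∞)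
    (B S : ℝ → Matrix (Fin d) (Fin d) ℝ) (l : ℕ)
    (hBcont : ∀ i j, ContinuousOn (fun t => B t i j) {t : ℝ | 0 ≤ t ∧ ENNReal.ofReal t < T})
    (hderiv : ∀ t : ℝ, 0 ≤ t → ENNReal.ofReal t < T → ∀ i j,
      HasDerivAt (fun s => S s i j) (((B t)ᵀ * S t + S t * B t) i j) t)
    (h0psd : (S 0).PosSemidef) (h0rank : (S 0).rank = l) :
    ∀ t : ℝ, 0 ≤ t → ENNReal.ofReal t < T → (S t).PosSemidef ∧ (S t).rank = l := by
  intro t ht₀ htT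
  have hsub : Icc 0 t ⊆ {s : ℝ | 0 ≤ s ∧ ENNReal.ofReal s < T} :=
    fun s hs => ⟨hs.1, (ENNReal.ofReal_le_ofReal hs.2).trans_lt htT⟩
  have hcongr : IsCongruent (S 0) (S t) :=
    isCongruent_of_forall_hasDerivWithinAt_apply (fun i j => (hBcont i j).mono hsub)
      (fun s hs i j => (hderiv s (hsub hs).1 (hsub hs).2 i j).hasDerivWithinAt) ⟨ht₀, le_rfl⟩
  exact ⟨hcongr.posSemidef h0psd, hcongr.rank_eq.trans h0rank⟩

/-- Flows of the form `Σ' = Bᵀ Σ + Σ B` preserve positive semidefiniteness and the rank: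
if `Σ(0)` is positive semidefinite of rank `l`, so is `Σ(t)` for every `t ∈ [0, T)`. -/
theorem flow_preserves_rank_stratum {d : ℕ} (T : ℝ≥0∞) (hT : 0 < T)
    (B S : ℝ → Matrix (Fin d) (Fin d) ℝ) (l : ℕ)
    (hBcont : ∀ i j, ContinuousOn (fun t => B t i j) {t : ℝ | 0 ≤ t ∧ ENNReal.ofReal t < T})
    (hsymm : ∀ t : ℝ, 0 ≤ t → ENNReal.ofReal t < T → (S t).IsSymm)
    (hderiv : ∀ t : ℝ, 0 ≤ t → ENNReal.ofReal t < T → ∀ i j,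
      HasDerivAt (fun s => S s i j) (((B t)ᵀ * S t + S t * B t) i j) t)
    (h0psd : (S 0).PosSemidef) (h0rank : (S 0).rank = l) :
    ∀ t : ℝ, 0 ≤ t → ENNReal.ofReal t < T → (S t).PosSemidef ∧ (S t).rank = l :=
  flow_preserves_rank_stratum_general T B S l hBcont hderiv h0psd h0rank
end

section
/- Let G : ℝ^{d×d} → ℝ^{d×d} be continuous with G(Σ) symmetric for every Σ, and let Σ : [0,∞) → ℝ^{d×d} be a continuous bounded function taking positive semidefinite symmetric values, such that the nonnegative function t ↦ Tr(G(Σ(t)) Σ(t) G(Σ(t))) is integrable on [0,∞). Then there exist times tᵢ → ∞ and a positive semidefinite symmetric matrix Σ₀ such that Σ(tᵢ) → Σ₀, G(Σ₀) Σ₀ = Σ₀ G(Σ₀) = 0, and consequently Tr(G(Σ₀)(M Σ₀ + Σ₀ Mᵀ)) = 0 for every M ∈ ℝ^{d×d}. -/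
/-! An integrable function on a half-line is small along some sequence of times tending to
infinity; along a further subsequence the bounded flow converges, and by continuity the limit
`Σ₀` satisfies `Tr(G Σ₀ G) = 0` with `G = G(Σ₀)`. Writing `Σ₀ = RᴴR`, this trace is the squared
Frobenius norm of `RG`, so `RG = 0` and hence `Σ₀G = 0`; transposing gives `GΣ₀ = 0`. -/

open Matrix Set Filter MeasureTheory

theorem MeasureTheory.IntegrableOn.frequently_norm_lt_atTop {E : Type*} [NormedAddCommGroup E]
    {f : ℝ → E} {a : ℝ} (hf : IntegrableOn f (Ici a)) {ε : ℝ} (hε : 0 < ε) :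
    ∃ᶠ t in atTop, ‖f t‖ < ε := by
  rw [frequently_atTop]
  intro T
  by_contra! hlarge
  have hsub : Ici (max T a) ⊆ {t | ε ≤ ‖f t‖} := fun t ht => hlarge t (le_of_max_le_left ht)
  have hinfinite : volume.restrict (Ici a) (Ici (max T a)) = ⊤ := by
    rw [Measure.restrict_apply measurableSet_Ici, Ici_inter_Ici, max_assoc, max_self,
      Real.volume_Ici]
  exact (hf.measure_norm_ge_lt_top hε).ne (measure_mono_top hsub hinfinite)

theorem MeasureTheory.IntegrableOn.exists_seq_tendsto_atTop_tendsto_zero {E : Type*}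
    [NormedAddCommGroup E] {f : ℝ → E} {a : ℝ} (hf : IntegrableOn f (Ici a)) :
    ∃ ts : ℕ → ℝ, Tendsto ts atTop atTop ∧ (∀ n, a ≤ ts n) ∧ Tendsto (f ∘ ts) atTop (nhds 0) := by
  have hsmall (n : ℕ) : ∃ t ≥ max (n : ℝ) a, ‖f t‖ < 1 / (n + 1) :=
    (hf.frequently_norm_lt_atTop (by positivity)).forall_exists_of_atTop _
  choose ts hts_ge hts_small using hsmall
  refine ⟨ts, tendsto_atTop_mono (fun n => le_of_max_le_left (hts_ge n))
    tendsto_natCast_atTop_atTop, fun n => le_of_max_le_right (hts_ge n), ?_⟩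
  exact squeeze_zero_norm (fun n => (hts_small n).le) tendsto_one_div_add_atTop_nhds_zero_nat

theorem Matrix.exists_strictMono_tendsto_of_abs_le {m n : Type*} [Countable m] [Countable n]
    {x : ℕ → Matrix m n ℝ} {C : ℝ} (hx : ∀ k i j, |x k i j| ≤ C) :
    ∃ A : Matrix m n ℝ, ∃ φ : ℕ → ℕ, StrictMono φ ∧ Tendsto (x ∘ φ) atTop (nhds A) := by
  have : FirstCountableTopology (Matrix m n ℝ) :=
    inferInstanceAs (FirstCountableTopology (m → n → ℝ))
  have hbox : IsCompact (univ.pi fun _ : m => univ.pi fun _ : n => Icc (-C) C) :=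
    isCompact_univ_pi fun _ => isCompact_univ_pi fun _ => isCompact_Icc
  obtain ⟨A, -, φ, hφ, hA⟩ := hbox.tendsto_subseq fun k i _ j _ => abs_le.mp (hx k i j)
  exact ⟨A, φ, hφ, hA⟩

section PosSemidef

open scoped ComplexOrder MatrixOrder

variable {n 𝕜 : Type*} [Fintype n] [RCLike 𝕜]

theorem Matrix.isClosed_setOf_posSemidef : IsClosed {A : Matrix n n 𝕜 | A.PosSemidef} := by
  simp_rw [posSemidef_iff_dotProduct_mulVec, ofPred_and, ofPred_forall]
  refine (isClosed_eq continuous_id.matrix_conjTranspose continuous_id).inter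
    (isClosed_iInter fun x => isClosed_le continuous_const ?_)
  exact continuous_const.dotProduct (continuous_id.matrix_mulVec continuous_const)

theorem Matrix.PosSemidef.mul_eq_zero_of_trace_conjTranspose_mul_mul_eq_zero {m : Type*}
    [Fintype m] {A : Matrix n n 𝕜} (hA : A.PosSemidef) {B : Matrix n m 𝕜}
    (h : (Bᴴ * A * B).trace = 0) : A * B = 0 := by
  classical
  obtain ⟨R, rfl⟩ := CStarAlgebra.nonneg_iff_eq_star_mul_self.mp hA.nonneg
  have hRB : (R * B)ᴴ * (R * B) = Bᴴ * (star R * R) * B := by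
    simp only [conjTranspose_mul, star_eq_conjTranspose, Matrix.mul_assoc]
  rw [← hRB, trace_conjTranspose_mul_self_eq_zero_iff] at h
  rw [Matrix.mul_assoc, h, Matrix.mul_zero]

end PosSemidef

theorem Matrix.trace_mul_add_mul_eq_zero {n R : Type*} [Fintype n] [CommSemiring R]
    {A B : Matrix n n R} (hAB : A * B = 0) (hBA : B * A = 0) (M N : Matrix n n R) :
    (B * (M * A + A * N)).trace = 0 := by
  rw [Matrix.mul_add, trace_add, ← Matrix.mul_assoc, trace_mul_cycle, hAB, ← Matrix.mul_assoc,
    hBA]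
  simp

theorem subsequential_convergence_to_stationary_point_general {d : ℕ}
    (G : Matrix (Fin d) (Fin d) ℝ → Matrix (Fin d) (Fin d) ℝ)
    (hGcont : Continuous G) (hGsymm : ∀ S, (G S).IsSymm)
    (S : ℝ → Matrix (Fin d) (Fin d) ℝ)
    (hbdd : ∃ C : ℝ, ∀ t : ℝ, 0 ≤ t → ∀ i j, |S t i j| ≤ C)
    (hpsd : ∀ t : ℝ, 0 ≤ t → (S t).PosSemidef)
    (hint : IntegrableOn (fun t => (G (S t) * S t * G (S t)).trace) (Ici 0)) :
    ∃ (ts : ℕ → ℝ) (S₀ : Matrix (Fin d) (Fin d) ℝ),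
      Tendsto ts atTop atTop ∧
      Tendsto (fun n => S (ts n)) atTop (nhds S₀) ∧
      S₀.PosSemidef ∧ G S₀ * S₀ = 0 ∧ S₀ * G S₀ = 0 ∧
      ∀ M : Matrix (Fin d) (Fin d) ℝ, (G S₀ * (M * S₀ + S₀ * Mᵀ)).trace = 0 := by
  obtain ⟨C, hC⟩ := hbdd
  obtain ⟨ts, hts, hts_nonneg, htrace_tendsto⟩ := hint.exists_seq_tendsto_atTop_tendsto_zero
  obtain ⟨S₀, φ, hφ, hS₀⟩ :=
    exists_strictMono_tendsto_of_abs_le fun n => hC (ts n) (hts_nonneg n)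
  refine ⟨ts ∘ φ, S₀, hts.comp hφ.tendsto_atTop, hS₀, ?_⟩
  have hS₀psd : S₀.PosSemidef :=
    isClosed_setOf_posSemidef.mem_of_tendsto hS₀ (.of_forall fun n => hpsd _ (hts_nonneg _))
  have htrace : (G S₀ * S₀ * G S₀).trace = 0 := by
    have hcont : Continuous fun A => (G A * A * G A).trace := by fun_prop
    exact tendsto_nhds_unique ((hcont.tendsto S₀).comp hS₀)
      (htrace_tendsto.comp hφ.tendsto_atTop)
  have hGherm : (G S₀)ᴴ = G S₀ := by
    rw [conjTranspose_eq_transpose_of_trivial]; exact hGsymm S₀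
  have hSG : S₀ * G S₀ = 0 :=
    hS₀psd.mul_eq_zero_of_trace_conjTranspose_mul_mul_eq_zero (by rwa [hGherm])
  have hGS : G S₀ * S₀ = 0 := by
    simpa only [conjTranspose_mul, hGherm, hS₀psd.1.eq, conjTranspose_zero]
      using congrArg conjTranspose hSG
  exact ⟨hS₀psd, hGS, hSG, fun M => trace_mul_add_mul_eq_zero hSG hGS M Mᵀ⟩

/-- Subsequential convergence to stationary points: if `Σ : [0,∞) → Sym²` is continuous,
bounded, positive semidefinite valued, and `t ↦ Tr(G(Σ(t)) Σ(t) G(Σ(t)))` is integrable on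
`[0,∞)`, then along some times `tᵢ → ∞` the flow converges to a positive semidefinite `Σ₀`
with `G(Σ₀)Σ₀ = Σ₀G(Σ₀) = 0`, hence `Tr(G(Σ₀)(MΣ₀ + Σ₀Mᵀ)) = 0` for all `M`. -/
theorem subsequential_convergence_to_stationary_point {d : ℕ}
    (G : Matrix (Fin d) (Fin d) ℝ → Matrix (Fin d) (Fin d) ℝ)
    (hGcont : Continuous G) (hGsymm : ∀ S, (G S).IsSymm)
    (S : ℝ → Matrix (Fin d) (Fin d) ℝ)
    (hScont : ContinuousOn S (Ici 0))
    (hbdd : ∃ C : ℝ, ∀ t : ℝ, 0 ≤ t → ∀ i j, |S t i j| ≤ C)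
    (hpsd : ∀ t : ℝ, 0 ≤ t → (S t).PosSemidef)
    (hint : IntegrableOn (fun t => (G (S t) * S t * G (S t)).trace) (Ici 0)) :
    ∃ (ts : ℕ → ℝ) (S₀ : Matrix (Fin d) (Fin d) ℝ),
      Tendsto ts atTop atTop ∧
      Tendsto (fun n => S (ts n)) atTop (nhds S₀) ∧
      S₀.PosSemidef ∧ G S₀ * S₀ = 0 ∧ S₀ * G S₀ = 0 ∧
      ∀ M : Matrix (Fin d) (Fin d) ℝ, (G S₀ * (M * S₀ + S₀ * Mᵀ)).trace = 0 :=
  subsequential_convergence_to_stationary_point_general G hGcont hGsymm S hbdd hpsd hint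
end

section
/- Let k : ℝ^d → (0,∞) be measurable with ∫ k(ω) dω = 1, let g ∈ L¹(ℝ^d; ℂ) with N(g) := ∫ |g(ω)|²/k(ω) dω < ∞, and set f_g(x) = ∫ g(ω) e^{2πi⟨x,ω⟩} dω. Let α > 0, s > 0, U₁₁ ∈ ℝ, and define (H_s f_g)(x) = ∫_ℝ f_g(x + U₁₁ y e₁) dν(y), with ν the Gaussian measure N(0, α² s) on ℝ and e₁ the first standard basis vector. Then H_s f_g = f_{g_s}, where g_s(ω) = exp(−2π² α² U₁₁² ω₁² s) · g(ω), and N(g_s) = ∫ exp(−4π² α² U₁₁² ω₁² s) |g(ω)|²/k(ω) dω ≤ N(g). -/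
/-!
Averaging the character `x ↦ e^{2πi⟨x,ω⟩}` over the translates `x + y e` with `y ~ ν` multiplies it
by the characteristic function of `ν` at `2π⟨e,ω⟩`; for `ν = N(0, α²s)` and `e = U₁₁e₁` this is
`e^{−2π²α²U₁₁²ω₁²s}`. Since `g` is integrable and characters have modulus one, Fubini moves the
average inside `f_g`, so the factor lands on `g`. The factor lies in `(0, 1]`, hence its square
damps `|g|²/k` pointwise.
-/

open MeasureTheory ProbabilityTheory Matrix Real

/-- The first standard basis vector of `ℝ^d`. -/
noncomputable def stdBasisOne (d : ℕ) [NeZero d] : Fin d → ℝ :=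
  Pi.single (0 : Fin d) (1 : ℝ)

open Complex in
lemma norm_cexp_two_pi_I_mul_ofReal (r : ℝ) : ‖cexp (2 * π * I * r)‖ = 1 := by
  rw [show 2 * π * I * r = ((2 * π * r : ℝ) : ℂ) * I by push_cast; ring, norm_exp_ofReal_mul_I]

open Complex in
theorem integral_integral_cexp_translate_eq_charFun_mul {ι : Type*} [Fintype ι]
    {μ : Measure (ι → ℝ)} [SFinite μ] {ν : Measure ℝ} [IsFiniteMeasure ν] {g : (ι → ℝ) → ℂ} (hg : Integrable g μ)
    (x e : ι → ℝ) :
    ∫ y, ∫ ω, g ω * cexp (2 * π * I * (((x + y • e) ⬝ᵥ ω : ℝ) : ℂ)) ∂μ ∂ν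
      = ∫ ω, (charFun ν (2 * π * (e ⬝ᵥ ω)) * g ω) * cexp (2 * π * I * ((x ⬝ᵥ ω : ℝ) : ℂ)) ∂μ := by
  set F : (ι → ℝ) → ℂ := fun ω ↦ g ω * cexp (2 * π * I * ((x ⬝ᵥ ω : ℝ) : ℂ))
  set G : ℝ × (ι → ℝ) → ℂ := fun p ↦ cexp (((2 * π * (e ⬝ᵥ p.2) * p.1 : ℝ) : ℂ) * I)
  have hsplit : ∀ y ω, g ω * cexp (2 * π * I * (((x + y • e) ⬝ᵥ ω : ℝ) : ℂ)) = F ω * G (y, ω) := by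
    intro y ω
    simp only [F, G, add_dotProduct, smul_dotProduct, smul_eq_mul, mul_assoc, ← Complex.exp_add]
    congr 2
    push_cast
    ring
  have hF : Integrable F μ :=
    hg.mul_bdd (by fun_prop) (.of_forall fun ω ↦ (norm_cexp_two_pi_I_mul_ofReal _).le)
  have hFG : Integrable (Function.uncurry fun y ω ↦ F ω * G (y, ω)) (ν.prod μ) :=
    (hF.comp_snd ν).mul_bdd (by fun_prop) (.of_forall fun p ↦ (norm_exp_ofReal_mul_I _).le)
  simp_rw [hsplit]
  rw [integral_integral_swap hFG]
  refine integral_congr_ae (.of_forall fun ω ↦ ?_)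
  simp only [integral_const_mul, charFun_apply_real, F, G, Complex.ofReal_mul]
  ring

lemma norm_ofReal_exp_mul_sq (a : ℝ) (z : ℂ) :
    ‖(rexp a : ℂ) * z‖ ^ 2 = rexp (2 * a) * ‖z‖ ^ 2 := by
  rw [norm_mul, Complex.norm_real, norm_of_nonneg (exp_pos a).le, mul_pow, ← exp_nat_mul]
  norm_num

lemma integral_mul_le_integral_of_le_one {α : Type*} [MeasurableSpace α] {μ : Measure α}
    {c f : α → ℝ} (hf : Integrable f μ) (hf0 : ∀ x, 0 ≤ f x) (hc0 : ∀ x, 0 ≤ c x)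
    (hc1 : ∀ x, c x ≤ 1) : ∫ x, c x * f x ∂μ ≤ ∫ x, f x ∂μ :=
  integral_mono_of_nonneg (.of_forall fun x ↦ mul_nonneg (hc0 x) (hf0 x)) hf
    (.of_forall fun x ↦ mul_le_of_le_one_left (hf0 x) (hc1 x))

/-- The variance is written `⟨v, hv⟩` as in the theorem: that term has type `{r // 0 ≤ r}`, not
`ℝ≥0`, so neither `charFun_gaussianReal` nor instance search applies to it directly. -/
lemma charFun_gaussianReal_zero {v : ℝ} (hv : 0 ≤ v) (t : ℝ) :
    charFun (gaussianReal 0 ⟨v, hv⟩) t = (rexp (-(v * t ^ 2 / 2)) : ℂ) := by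
  rw [charFun_gaussianReal (μ := 0) (v := ⟨v, hv⟩), Complex.ofReal_exp]
  change Complex.exp (_ - (v : ℂ) * _ / 2) = _
  congr 1
  push_cast
  ring

lemma smul_stdBasisOne_dotProduct {d : ℕ} [NeZero d] (a : ℝ) (ω : Fin d → ℝ) :
    (a • stdBasisOne d) ⬝ᵥ ω = a * ω 0 := by
  rw [smul_dotProduct, stdBasisOne, single_dotProduct, one_mul, smul_eq_mul]

theorem gaussian_smoothing_contracts_rkhs_norm_general {d : ℕ} [NeZero d]
    (k : (Fin d → ℝ) → ℝ) (hkpos : ∀ ω, 0 < k ω)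
    (g : (Fin d → ℝ) → ℂ) (hg : Integrable g)
    (hN : Integrable fun ω => ‖g ω‖ ^ 2 / k ω)
    (α s U₁₁ : ℝ) (hs : 0 < s) :
    (∀ x : Fin d → ℝ,
      (∫ y, (∫ ω : Fin d → ℝ, g ω * Complex.exp ((2 * π * Complex.I)
            * (((x + (U₁₁ * y) • stdBasisOne d) ⬝ᵥ ω : ℝ) : ℂ)))
        ∂(gaussianReal 0 ⟨α ^ 2 * s, mul_nonneg (sq_nonneg α) hs.le⟩))
      = ∫ ω : Fin d → ℝ,
          ((Real.exp (-(2 * π ^ 2 * α ^ 2 * U₁₁ ^ 2 * (ω 0) ^ 2 * s)) : ℂ) * g ω)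
            * Complex.exp ((2 * π * Complex.I) * ((x ⬝ᵥ ω : ℝ) : ℂ))) ∧
    (∫ ω : Fin d → ℝ,
        ‖(Real.exp (-(2 * π ^ 2 * α ^ 2 * U₁₁ ^ 2 * (ω 0) ^ 2 * s)) : ℂ) * g ω‖ ^ 2 / k ω)
      = (∫ ω : Fin d → ℝ,
          Real.exp (-(4 * π ^ 2 * α ^ 2 * U₁₁ ^ 2 * (ω 0) ^ 2 * s)) * (‖g ω‖ ^ 2 / k ω)) ∧
    (∫ ω : Fin d → ℝ,
        Real.exp (-(4 * π ^ 2 * α ^ 2 * U₁₁ ^ 2 * (ω 0) ^ 2 * s)) * (‖g ω‖ ^ 2 / k ω))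
      ≤ ∫ ω : Fin d → ℝ, ‖g ω‖ ^ 2 / k ω := by
  refine ⟨fun x ↦ ?_, integral_congr_ae (.of_forall fun ω ↦ ?_), ?_⟩
  · simp_rw [fun y : ℝ ↦ show (U₁₁ * y) • stdBasisOne d = y • (U₁₁ • stdBasisOne d) by
      rw [smul_smul, mul_comm]]
    have := instIsProbabilityMeasureGaussianReal 0 ⟨α ^ 2 * s, mul_nonneg (sq_nonneg α) hs.le⟩
    rw [integral_integral_cexp_translate_eq_charFun_mul hg]
    refine integral_congr_ae (.of_forall fun ω ↦ ?_)
    simp only [smul_stdBasisOne_dotProduct, charFun_gaussianReal_zero]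
    congr 4
    ring
  · simp only [norm_ofReal_exp_mul_sq, mul_div_assoc]
    congr 2
    ring
  · refine integral_mul_le_integral_of_le_one hN (fun ω ↦ div_nonneg (sq_nonneg _) (hkpos ω).le)
      (fun ω ↦ (exp_pos _).le) (fun ω ↦ exp_le_one_iff.mpr ?_)
    simp only [neg_nonpos]
    positivity

/-- Norm contraction of the Gaussian smoothing operator on the RKHS: with
`f_g(x) = ∫ g(ω)e^{2πi⟨x,ω⟩}dω` and `(H_s f)(x) = ∫ f(x + U₁₁ y e₁) dN(0,α²s)(y)`, one has
`H_s f_g = f_{g_s}` for `g_s(ω) = e^{−2π²α²U₁₁²ω₁²s} g(ω)`, and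
`N(g_s) = ∫ e^{−4π²α²U₁₁²ω₁²s}|g|²/k dω ≤ N(g)`. -/
theorem gaussian_smoothing_contracts_rkhs_norm {d : ℕ} [NeZero d]
    (k : (Fin d → ℝ) → ℝ) (hk : Measurable k) (hkpos : ∀ ω, 0 < k ω)
    (hkint : Integrable k) (hk1 : (∫ ω, k ω) = 1)
    (g : (Fin d → ℝ) → ℂ) (hgmeas : Measurable g) (hg : Integrable g)
    (hN : Integrable fun ω => ‖g ω‖ ^ 2 / k ω)
    (α s U₁₁ : ℝ) (hα : 0 < α) (hs : 0 < s) :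
    (∀ x : Fin d → ℝ,
      (∫ y, (∫ ω : Fin d → ℝ, g ω * Complex.exp ((2 * π * Complex.I)
            * (((x + (U₁₁ * y) • stdBasisOne d) ⬝ᵥ ω : ℝ) : ℂ)))
        ∂(gaussianReal 0 ⟨α ^ 2 * s, mul_nonneg (sq_nonneg α) hs.le⟩))
      = ∫ ω : Fin d → ℝ,
          ((Real.exp (-(2 * π ^ 2 * α ^ 2 * U₁₁ ^ 2 * (ω 0) ^ 2 * s)) : ℂ) * g ω)
            * Complex.exp ((2 * π * Complex.I) * ((x ⬝ᵥ ω : ℝ) : ℂ))) ∧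
    (∫ ω : Fin d → ℝ,
        ‖(Real.exp (-(2 * π ^ 2 * α ^ 2 * U₁₁ ^ 2 * (ω 0) ^ 2 * s)) : ℂ) * g ω‖ ^ 2 / k ω)
      = (∫ ω : Fin d → ℝ,
          Real.exp (-(4 * π ^ 2 * α ^ 2 * U₁₁ ^ 2 * (ω 0) ^ 2 * s)) * (‖g ω‖ ^ 2 / k ω)) ∧
    (∫ ω : Fin d → ℝ,
        Real.exp (-(4 * π ^ 2 * α ^ 2 * U₁₁ ^ 2 * (ω 0) ^ 2 * s)) * (‖g ω‖ ^ 2 / k ω))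
      ≤ ∫ ω : Fin d → ℝ, ‖g ω‖ ^ 2 / k ω :=
  gaussian_smoothing_contracts_rkhs_norm_general k hkpos g hg hN α s U₁₁ hs
end
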